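/- arXiv:2510.10737 — 2 statements merged into one kernel-verified Lean document; each statement's English description precedes it below -/
import Mathlib

section
/- Let k be a field, R a k-algebra, M an R-module, and F_1,...,F_r decreasing ℤ-indexed filtrations on M with F_i^0 M = M for all i, such that the extended Rees module Rees(M) is flat over k[t_1,...,t_r]. Fix α = (α_1,...,α_r) ∈ ℝ_{>0}^r and define the ℝ-indexed filtration F_α^λ M = Σ_{⟨α,m⟩ ≥ λ, m ∈ ℕ^r} F_1^{m_1}M ∩ ⋯ ∩ F_r^{m_r}M. Then F_α^0 M = M, and for every λ ≥ 0 there is a canonical isomorphism F_α^λ M / F_α^{>λ} M ≅ ⊕_{⟨α,m⟩ = λ} (F_1^{m_1}M ∩ ⋯ ∩ F_r^{m_r}M) / Σ_{i=1}^r (F_1^{m_1}M ∩ ⋯ ∩ F_i^{m_i+1}M ∩ ⋯ ∩ F_r^{m_r}M). -/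
/-!
Write `F^m = 𝓕₁^{m₁}M ∩ ⋯ ∩ 𝓕_r^{m_r}M`. The pieces `F^m` with `⟨α, m⟩ = λ` span
`𝓕_α^λ M` modulo `𝓕_α^{>λ} M`, and each `F^{m + eⱼ}` lies in `𝓕_α^{>λ} M`, so the whole point is
the independence `F^m ∩ (𝓕_α^{>λ} M + Σ_{m' ≠ m} F^{m'}) ⊆ Σⱼ F^{m + eⱼ}`. Every `c ≠ m` with
`⟨α, c⟩ ≥ λ` exceeds `m` in some coordinate `j` (as `α > 0`), so `F^{m ⊔ c} ⊆ F^{m + eⱼ}`, and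
independence follows from the distributivity `F^a ∩ Σ_{b ∈ T} F^b ⊆ Σ_{b ∈ T} F^{a ⊔ b}`.

Distributivity is where flatness enters. If `x = Σ x_b ∈ F^a` with `x_b ∈ F^b`, then
`t^a · x t^{-a} = Σ t^b · x_b t^{-b}` is a relation in `Rees(M)`; by the equational criterion it
is trivial, which writes `x t^{-a}` as a `k[t]`-combination of elements of `Rees(M)`. The
coefficient of `t^{-a}` then exhibits `x` as a sum of elements of `F^{a+e}`, where `t^{a+e}` is a
monomial of a syzygy coefficient and hence divisible by some `t^b`, i.e. `b ≤ a + e`.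
-/

open scoped TensorProduct

section ReesSetup

variable (k : Type) [Field k] (r : ℕ)

/-- `k[t₁^{±1}, …, t_r^{±1}]`, the group algebra of `ℤ^r` over `k`. -/
abbrev LaurentAlg : Type := AddMonoidAlgebra k (Fin r → ℤ)

/-- The canonical `k`-algebra map `k[t₁, …, t_r] → k[t₁^{±1}, …, t_r^{±1}]`, `tᵢ ↦ tᵢ`. -/
noncomputable def polyToLaurent : MvPolynomial (Fin r) k →ₐ[k] LaurentAlg k r :=
  MvPolynomial.aeval fun i =>
    (AddMonoidAlgebra.single (Pi.single i (1 : ℤ)) (1 : k) : LaurentAlg k r)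

/-- `k[t₁^{±1}, …, t_r^{±1}]` as an algebra over `k[t₁, …, t_r]`. -/
noncomputable instance laurentAlgebra :
    Algebra (MvPolynomial (Fin r) k) (LaurentAlg k r) :=
  (polyToLaurent k r).toRingHom.toAlgebra

noncomputable instance laurentTower :
    IsScalarTower k (MvPolynomial (Fin r) k) (LaurentAlg k r) :=
  IsScalarTower.of_algebraMap_eq' ((polyToLaurent k r).comp_algebraMap).symm

noncomputable instance laurentSMulComm :
    SMulCommClass k (MvPolynomial (Fin r) k) (LaurentAlg k r) :=
  ⟨fun c p a => by simp only [Algebra.smul_def]; ring⟩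

variable (M : Type) [AddCommGroup M] [Module k M]

/-- The Laurent polynomial module `M[t₁^{±1}, …, t_r^{±1}] = k[t^{±1}] ⊗_k M`,
as a module over the polynomial ring `k[t₁, …, t_r]`. -/
def LaurentMod : Type := LaurentAlg k r ⊗[k] M

noncomputable instance : AddCommGroup (LaurentMod k r M) :=
  inferInstanceAs (AddCommGroup (LaurentAlg k r ⊗[k] M))
noncomputable instance : Module k (LaurentMod k r M) :=
  inferInstanceAs (Module k (LaurentAlg k r ⊗[k] M))
noncomputable instance : Module (MvPolynomial (Fin r) k) (LaurentMod k r M) :=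
  inferInstanceAs (Module (MvPolynomial (Fin r) k) (LaurentAlg k r ⊗[k] M))
noncomputable instance : IsScalarTower k (MvPolynomial (Fin r) k) (LaurentMod k r M) :=
  inferInstanceAs (IsScalarTower k (MvPolynomial (Fin r) k) (LaurentAlg k r ⊗[k] M))

/-- The element `m t₁^{d₁} ⋯ t_r^{d_r}` of `M[t₁^{±1}, …, t_r^{±1}]`. -/
noncomputable def laurentTerm (d : Fin r → ℤ) (x : M) : LaurentMod k r M :=
  (show LaurentAlg k r ⊗[k] M from
    (AddMonoidAlgebra.single d (1 : k) : LaurentAlg k r) ⊗ₜ[k] x)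

variable (Rg : Type) [CommRing Rg] [Algebra k Rg] [Module Rg M] [IsScalarTower k Rg M]

/-- The extended Rees module
`Rees(M) = ⊕_{m ∈ ℤ^r} (𝓕₁^{m₁}M ∩ ⋯ ∩ 𝓕_r^{m_r}M) t₁^{-m₁} ⋯ t_r^{-m_r}`
inside `M[t₁^{±1}, …, t_r^{±1}]`, as a submodule over the polynomial ring
`k[t₁, …, t_r]`. The monomial of degree `d = -m` carries the elements of
`𝓕₁^{m₁}M ∩ ⋯ ∩ 𝓕_r^{m_r}M`. -/
noncomputable def ReesSubmodule (F : Fin r → ℤ → Submodule Rg M) :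
    Submodule (MvPolynomial (Fin r) k) (LaurentMod k r M) :=
  Submodule.span _
    {z | ∃ (d : Fin r → ℤ) (x : M), (∀ i, x ∈ F i (-(d i))) ∧ z = laurentTerm k r M d x}

end ReesSetup
section DerivedFiltration

variable {r : ℕ} {M : Type} [AddCommGroup M] {Rg : Type} [CommRing Rg] [Module Rg M]

/-- `𝓕₁^{m₁}M ∩ ⋯ ∩ 𝓕_r^{m_r}M` for `m ∈ ℤ^r`. -/
def interF (F : Fin r → ℤ → Submodule Rg M) (m : Fin r → ℤ) : Submodule Rg M :=
  ⨅ i, F i (m i)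

/-- The derived `ℝ`-indexed filtration
`𝓕_α^λ M = Σ_{⟨α,m⟩ ≥ λ, m ∈ ℕ^r} 𝓕₁^{m₁}M ∩ ⋯ ∩ 𝓕_r^{m_r}M`. -/
noncomputable def Falpha (F : Fin r → ℤ → Submodule Rg M) (α : Fin r → ℝ) (t : ℝ) :
    Submodule Rg M :=
  ⨆ (m : Fin r → ℕ) (_ : t ≤ ∑ i, α i * (m i : ℝ)), interF F fun i => (m i : ℤ)

/-- `𝓕_α^{>λ} M = ⋃_{λ' > λ} 𝓕_α^{λ'} M`. -/
noncomputable def FalphaGt (F : Fin r → ℤ → Submodule Rg M) (α : Fin r → ℝ) (t : ℝ) :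
    Submodule Rg M :=
  ⨆ (t' : ℝ) (_ : t < t'), Falpha F α t'

end DerivedFiltration

namespace Submodule

open DirectSum

variable {R M ι : Type*} [Ring R] [AddCommGroup M] [Module R M] [DecidableEq ι]
  {P Q : Submodule R M} {G D : ι → Submodule R M}

theorem mem_iSup_iff_exists_coeLinearMap {x : M} :
    x ∈ ⨆ i, G i ↔ ∃ f : ⨁ i, G i, coeLinearMap G f = x := by
  rw [← range_coeLinearMap, LinearMap.mem_range]

noncomputable def sumToQuotient (hGP : ∀ i, G i ≤ P) :
    (⨁ i, G i) →ₗ[R] P ⧸ Q.comap P.subtype :=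
  (Q.comap P.subtype).mkQ ∘ₗ (coeLinearMap G).codRestrict P fun f =>
    iSup_le hGP (mem_iSup_iff_exists_coeLinearMap.mpr ⟨f, rfl⟩)

theorem sumToQuotient_surjective (hGP : ∀ i, G i ≤ P) (hPQ : P ≤ (⨆ i, G i) ⊔ Q) :
    Function.Surjective (sumToQuotient (Q := Q) hGP) := by
  rintro ⟨p, hp⟩
  obtain ⟨u, hu, v, hv, rfl⟩ := mem_sup.mp (hPQ hp)
  obtain ⟨f, rfl⟩ := mem_iSup_iff_exists_coeLinearMap.mp hu
  refine ⟨f, (Quotient.eq _).mpr ?_⟩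
  change coeLinearMap G f - (coeLinearMap G f + v) ∈ Q
  simpa using neg_mem hv

theorem coeLinearMap_erase_add (f : ⨁ i, G i) (i : ι) :
    coeLinearMap G (f.erase i) + f i = coeLinearMap G f := by
  conv_rhs => rw [← DFinsupp.erase_add_single i f]
  rw [map_add]
  exact congrArg _ (coeLinearMap_of G i (f i)).symm

theorem coeLinearMap_erase_mem (f : ⨁ i, G i) (i : ι) :
    coeLinearMap G (f.erase i) ∈ ⨆ (j) (_ : j ≠ i), G j := by
  rw [← DFinsupp.filter_ne_eq_erase, mem_biSup_iff_exists_dfinsupp]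
  exact ⟨f, rfl⟩

theorem ker_sumToQuotient (hGP : ∀ i, G i ≤ P) (hDQ : ∀ i, D i ≤ Q)
    (hGD : ∀ i, G i ⊓ (Q ⊔ ⨆ (j) (_ : j ≠ i), G j) ≤ D i) :
    LinearMap.ker (sumToQuotient (Q := Q) hGP) =
      LinearMap.ker (lmap fun i => ((D i).comap (G i).subtype).mkQ) := by
  ext f
  rw [LinearMap.mem_ker, sumToQuotient, LinearMap.comp_apply, mkQ_apply, Quotient.mk_eq_zero,
    ker_lmap]
  simp only [mem_comap, mem_pi, Set.mem_univ, true_implies, LinearMap.mem_ker, mkQ_apply,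
    Quotient.mk_eq_zero]
  constructor
  · intro hf i
    change coeLinearMap G f ∈ Q at hf
    refine hGD i ⟨(f i).2, ?_⟩
    change (f i : M) ∈ Q ⊔ _
    rw [← add_sub_cancel_left (coeLinearMap G (f.erase i)) (f i : M), coeLinearMap_erase_add]
    exact sub_mem (mem_sup_left hf) (mem_sup_right (coeLinearMap_erase_mem f i))
  · intro hf
    exact dfinsuppSumAddHom_mem _ _ _ fun i _ => hDQ i (hf i)

noncomputable def quotientEquivDirectSumQuotient (hGP : ∀ i, G i ≤ P) (hDQ : ∀ i, D i ≤ Q)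
    (hPQ : P ≤ (⨆ i, G i) ⊔ Q) (hGD : ∀ i, G i ⊓ (Q ⊔ ⨆ (j) (_ : j ≠ i), G j) ≤ D i) :
    (P ⧸ Q.comap P.subtype) ≃ₗ[R] ⨁ i, G i ⧸ (D i).comap (G i).subtype :=
  (LinearMap.quotKerEquivOfSurjective _ (sumToQuotient_surjective hGP hPQ)).symm ≪≫ₗ
    quotEquivOfEq _ _ (ker_sumToQuotient hGP hDQ hGD) ≪≫ₗ
    LinearMap.quotKerEquivOfSurjective (M₂ := ⨁ i, G i ⧸ (D i).comap (G i).subtype) _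
      ((lmap_surjective _).mpr fun _ => mkQ_surjective _)

end Submodule

section Laurent

variable (k : Type) [Field k] (r : ℕ) (M : Type) [AddCommGroup M] [Module k M]

noncomputable def expCast : (Fin r →₀ ℕ) →+ (Fin r → ℤ) :=
  AddMonoidHom.pi fun i => (Nat.castAddMonoidHom ℤ).comp (Finsupp.applyAddHom i)

theorem expCast_apply (e : Fin r →₀ ℕ) (i : Fin r) : expCast r e i = e i :=
  rfl

@[simp]
theorem expCast_equivFunOnFinite_symm (a : Fin r → ℕ) :
    expCast r (Finsupp.equivFunOnFinite.symm a) = fun i => (a i : ℤ) :=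
  rfl

theorem polyToLaurent_eq_mapDomain :
    polyToLaurent k r = AddMonoidAlgebra.mapDomainAlgHom k k (expCast r) := by
  refine MvPolynomial.algHom_ext fun i => ?_
  rw [polyToLaurent, MvPolynomial.aeval_X]
  change _ = AddMonoidAlgebra.mapDomain _ (AddMonoidAlgebra.single _ _)
  rw [AddMonoidAlgebra.mapDomain_single]
  congr 1
  ext j
  simp [expCast, Pi.single_apply, Finsupp.single_apply, eq_comm]

theorem polyToLaurent_monomial (e : Fin r →₀ ℕ) (c : k) :
    polyToLaurent k r (MvPolynomial.monomial e c) = AddMonoidAlgebra.single (expCast r e) c := by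
  rw [polyToLaurent_eq_mapDomain]
  exact AddMonoidAlgebra.mapDomain_single

-- `LaurentMod` is a type synonym: pure tensors built here carry its instances, not those of `⊗`.
noncomputable def laurentTmul (f : LaurentAlg k r) (x : M) : LaurentMod k r M :=
  f ⊗ₜ[k] x

variable {k r M} in
theorem LaurentMod.induction_on {P : LaurentMod k r M → Prop} (z : LaurentMod k r M)
    (zero : P 0) (tmul : ∀ f x, P (laurentTmul k r M f x)) (add : ∀ z w, P z → P w → P (z + w)) :
    P z :=
  TensorProduct.induction_on z zero tmul add

noncomputable def laurentCoeff (g : Fin r → ℤ) : LaurentMod k r M →ₗ[k] M :=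
  TensorProduct.lift <| LinearMap.lsmul k M ∘ₗ Finsupp.lapply g ∘ₗ
    (AddMonoidAlgebra.coeffLinearEquiv k).toLinearMap

theorem laurentCoeff_laurentTmul (g : Fin r → ℤ) (f : LaurentAlg k r) (x : M) :
    laurentCoeff k r M g (laurentTmul k r M f x) = f.coeff g • x :=
  rfl

theorem laurentTerm_eq_laurentTmul (d : Fin r → ℤ) (x : M) :
    laurentTerm k r M d x = laurentTmul k r M (AddMonoidAlgebra.single d 1) x :=
  rfl

theorem laurentCoeff_laurentTerm (g d : Fin r → ℤ) (x : M) :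
    laurentCoeff k r M g (laurentTerm k r M d x) = if d = g then x else 0 := by
  rw [laurentTerm_eq_laurentTmul, laurentCoeff_laurentTmul, AddMonoidAlgebra.coeff_single,
    Finsupp.single_apply]
  split_ifs <;> simp

theorem smul_laurentTmul (p : MvPolynomial (Fin r) k) (f : LaurentAlg k r) (x : M) :
    p • laurentTmul k r M f x = laurentTmul k r M (polyToLaurent k r p * f) x :=
  rfl

theorem laurentCoeff_smul (p : MvPolynomial (Fin r) k) (g : Fin r → ℤ) (z : LaurentMod k r M) :
    laurentCoeff k r M g (p • z) =
      ∑ e ∈ p.support, p.coeff e • laurentCoeff k r M (g - expCast r e) z := by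
  induction z using LaurentMod.induction_on with
  | zero => simp only [smul_zero, map_zero, Finset.sum_const_zero]
  | tmul f x =>
    conv_lhs => rw [smul_laurentTmul, laurentCoeff_laurentTmul, p.as_sum]
    rw [map_sum, Finset.sum_mul, AddMonoidAlgebra.coeff_sum, Finsupp.finsetSum_apply,
      Finset.sum_smul]
    refine Finset.sum_congr rfl fun e _ => ?_
    rw [polyToLaurent_monomial, AddMonoidAlgebra.coeff_single_mul_apply, laurentCoeff_laurentTmul,
      mul_smul, neg_add_eq_sub]
  | add z w hz hw => simp only [smul_add, map_add, hz, hw, Finset.sum_add_distrib]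

theorem monomial_smul_laurentTerm (e : Fin r →₀ ℕ) (d : Fin r → ℤ) (x : M) :
    MvPolynomial.monomial e (1 : k) • laurentTerm k r M d x =
      laurentTerm k r M (expCast r e + d) x := by
  rw [laurentTerm_eq_laurentTmul, laurentTerm_eq_laurentTmul, smul_laurentTmul,
    polyToLaurent_monomial, AddMonoidAlgebra.single_mul_single, mul_one]

end Laurent

theorem MvPolynomial.exists_le_add_of_monomial_mul_eq_sum {σ R ι : Type*} [CommSemiring R]
    [Fintype ι] {a e : σ →₀ ℕ} {b : ι → σ →₀ ℕ} {p : MvPolynomial σ R}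
    {q : ι → MvPolynomial σ R} (h : monomial a 1 * p = ∑ i, monomial (b i) 1 * q i)
    (he : e ∈ p.support) : ∃ i, b i ≤ e + a := by
  have hcoeff := congrArg (coeff (e + a)) h
  rw [coeff_monomial_mul', if_pos le_add_self, add_tsub_cancel_right, one_mul, coeff_sum] at hcoeff
  obtain ⟨i, -, hi⟩ := Finset.exists_ne_zero_of_sum_ne_zero (hcoeff ▸ mem_support_iff.mp he)
  rw [coeff_monomial_mul'] at hi
  exact ⟨i, by_contra fun hle => hi (if_neg hle)⟩

section Rees

variable {k : Type} [Field k] {r : ℕ} {M : Type} [AddCommGroup M] [Module k M]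
  {Rg : Type} [CommRing Rg] [Module Rg M] {F : Fin r → ℤ → Submodule Rg M}

theorem interF_antitone (hdec : ∀ i, Antitone (F i)) : Antitone (interF F) :=
  fun _ _ h => iInf_mono fun i => hdec i (h i)

theorem laurentTerm_mem_reesSubmodule {d : Fin r → ℤ} {x : M} (hx : x ∈ interF F (-d)) :
    laurentTerm k r M d x ∈ ReesSubmodule k r M Rg F :=
  Submodule.subset_span ⟨d, x, Submodule.mem_iInf _ |>.mp hx, rfl⟩

theorem laurentCoeff_mem_interF [Algebra k Rg] [IsScalarTower k Rg M]
    (hdec : ∀ i, Antitone (F i)) {z : LaurentMod k r M} (hz : z ∈ ReesSubmodule k r M Rg F)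
    (g : Fin r → ℤ) :
    laurentCoeff k r M g z ∈ interF F (-g) := by
  induction hz using Submodule.span_induction generalizing g with
  | mem z hz =>
    obtain ⟨d, x, hx, rfl⟩ := hz
    rw [laurentCoeff_laurentTerm]
    split_ifs with hdg
    · exact Submodule.mem_iInf _ |>.mpr (hdg ▸ hx)
    · exact zero_mem _
  | zero => simp
  | add z w _ _ hz hw => simpa using add_mem (hz g) (hw g)
  | smul p z _ hz =>
    rw [laurentCoeff_smul]
    refine Submodule.sum_mem _ fun e _ => Submodule.smul_of_tower_mem _ _ ?_
    refine interF_antitone hdec (fun i => ?_) (hz (g - expCast r e))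
    simp [expCast]

theorem laurentCoeff_smul_mem_iSup_interF_sup [Algebra k Rg] [IsScalarTower k Rg M]
    (hdec : ∀ i, Antitone (F i)) {ι : Type} [Fintype ι] (a : Fin r → ℕ) (b : ι → Fin r → ℕ)
    {p : MvPolynomial (Fin r) k} {q : ι → MvPolynomial (Fin r) k}
    (h : MvPolynomial.monomial (Finsupp.equivFunOnFinite.symm a) 1 * p =
      ∑ i, MvPolynomial.monomial (Finsupp.equivFunOnFinite.symm (b i)) 1 * q i)
    {z : LaurentMod k r M} (hz : z ∈ ReesSubmodule k r M Rg F) :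
    laurentCoeff k r M (-fun l => (a l : ℤ)) (p • z) ∈
      ⨆ i, interF F fun l => ((a l ⊔ b i l : ℕ) : ℤ) := by
  rw [laurentCoeff_smul]
  refine Submodule.sum_mem _ fun e he => Submodule.smul_of_tower_mem _ _ ?_
  obtain ⟨i, hi⟩ := MvPolynomial.exists_le_add_of_monomial_mul_eq_sum h he
  refine Submodule.mem_iSup_of_mem i
    (interF_antitone hdec (fun l => ?_) (laurentCoeff_mem_interF hdec hz _))
  have hil := hi l
  simp only [Finsupp.coe_add, Pi.add_apply, Finsupp.coe_equivFunOnFinite_symm] at hil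
  simp only [Pi.neg_apply, Pi.sub_apply, expCast_apply, neg_sub, sub_neg_eq_add]
  omega

theorem sum_mem_iSup_interF_sup_of_flat [Algebra k Rg] [IsScalarTower k Rg M]
    (hdec : ∀ i, Antitone (F i))
    [Module.Flat (MvPolynomial (Fin r) k) (ReesSubmodule k r M Rg F)]
    {ι : Type} [Fintype ι] (a : Fin r → ℕ) (b : ι → Fin r → ℕ) (x : ι → M)
    (hx : ∀ i, x i ∈ interF F fun l => (b i l : ℤ)) (ha : ∑ i, x i ∈ interF F fun l => (a l : ℤ)) :
    ∑ i, x i ∈ ⨆ i, interF F fun l => ((a l ⊔ b i l : ℕ) : ℤ) := by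
  set N := ReesSubmodule k r M Rg F
  let t : (Fin r → ℕ) → MvPolynomial (Fin r) k := fun c =>
    MvPolynomial.monomial (Finsupp.equivFunOnFinite.symm c) 1
  let u : Option ι → N := fun o => o.elim
    ⟨laurentTerm k r M (-fun l => (a l : ℤ)) (∑ i, x i),
      laurentTerm_mem_reesSubmodule (by simpa using ha)⟩
    fun i => ⟨laurentTerm k r M (-fun l => (b i l : ℤ)) (x i),
      laurentTerm_mem_reesSubmodule (by simpa using hx i)⟩
  let q : Option ι → MvPolynomial (Fin r) k := fun o => o.elim (t a) fun i => -t (b i)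
  -- both sides of the relation are `∑ i, x i` placed in degree `0`
  have hrel : ∑ o, q o • u o = 0 := by
    apply Subtype.ext
    simp only [u, q, t, Fintype.sum_option, Option.elim, Submodule.coe_add, Submodule.coe_smul,
      Submodule.coe_sum, Submodule.coe_zero, neg_smul, Finset.sum_neg_distrib,
      monomial_smul_laurentTerm, expCast_equivFunOnFinite_symm, add_neg_cancel]
    rw [add_neg_eq_zero]
    exact TensorProduct.tmul_sum _ _ _
  obtain ⟨κ, A, y, hu, hq⟩ := Module.Flat.isTrivialRelation_of_sum_smul_eq_zero hrel
  have hsum : ∑ i, x i = laurentCoeff k r M (-fun l => (a l : ℤ)) (u none) := by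
    simp [u, laurentCoeff_laurentTerm]
  rw [hsum, hu none, Submodule.coe_sum, map_sum]
  refine Submodule.sum_mem _ fun j _ =>
    laurentCoeff_smul_mem_iSup_interF_sup hdec a b (q := fun i => A (some i) j) ?_ (y j).2
  simpa [q, t, Fintype.sum_option, add_neg_eq_zero] using hq j

theorem interF_inf_biSup_le_of_flat [Algebra k Rg] [IsScalarTower k Rg M]
    (hdec : ∀ i, Antitone (F i))
    [Module.Flat (MvPolynomial (Fin r) k) (ReesSubmodule k r M Rg F)]
    (a : Fin r → ℕ) (T : Set (Fin r → ℕ)) :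
    ((interF F fun l => (a l : ℤ)) ⊓ ⨆ b ∈ T, interF F fun l => (b l : ℤ)) ≤
      ⨆ b ∈ T, interF F fun l => ((a l ⊔ b l : ℕ) : ℤ) := by
  rintro x ⟨ha, hT⟩
  rw [iSup_subtype'] at hT
  obtain ⟨f, hf, rfl⟩ := (Submodule.mem_iSup_iff_exists_finsupp _ x).mp hT
  rw [Finsupp.sum, ← Finset.sum_coe_sort] at ha ⊢
  have h := sum_mem_iSup_interF_sup_of_flat (k := k) hdec a (fun c : f.support => c.1.1)
    (fun c => f c) (fun c => hf c) ha
  refine SetLike.le_def.mp (iSup_le fun c => ?_) h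
  exact le_iSup₂_of_le (f := fun b (_ : b ∈ T) => interF F fun l => ((a l ⊔ b l : ℕ) : ℤ))
    c.1.1 c.1.2 le_rfl

end Rees

section DerivedFiltration

variable {r : ℕ} {M : Type} [AddCommGroup M] {Rg : Type} [CommRing Rg] [Module Rg M]
  {F : Fin r → ℤ → Submodule Rg M} {α : Fin r → ℝ}

theorem exists_lt_of_ne_of_sum_mul_le (hα : ∀ i, 0 < α i) {m c : Fin r → ℕ} (hne : c ≠ m)
    (h : ∑ i, α i * (m i : ℝ) ≤ ∑ i, α i * (c i : ℝ)) : ∃ j, m j < c j := by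
  by_contra! hcm
  obtain ⟨j, hj⟩ := Function.ne_iff.mp hne
  have hlt : ∑ i, α i * (c i : ℝ) < ∑ i, α i * (m i : ℝ) :=
    Finset.sum_lt_sum (fun i _ => mul_le_mul_of_nonneg_left (by exact_mod_cast hcm i) (hα i).le)
      ⟨j, Finset.mem_univ j,
        mul_lt_mul_of_pos_left (by exact_mod_cast (hcm j).lt_of_ne hj) (hα j)⟩
  linarith

theorem interF_le_Falpha {t : ℝ} {m : Fin r → ℕ} (h : t ≤ ∑ i, α i * (m i : ℝ)) :
    (interF F fun i => (m i : ℤ)) ≤ Falpha F α t :=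
  le_iSup₂_of_le (f := fun (m : Fin r → ℕ) (_ : t ≤ ∑ i, α i * (m i : ℝ)) =>
    interF F fun i => (m i : ℤ)) m h le_rfl

theorem Falpha_le_FalphaGt {t t' : ℝ} (h : t < t') : Falpha F α t' ≤ FalphaGt F α t :=
  le_iSup₂_of_le (f := fun (t' : ℝ) (_ : t < t') => Falpha F α t') t' h le_rfl

theorem Falpha_zero_eq_top (hF0 : ∀ i, F i 0 = ⊤) : Falpha F α 0 = ⊤ :=
  eq_top_iff.mpr <| le_trans (by simp [interF, hF0]) (interF_le_Falpha (m := 0) (by simp))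

theorem FalphaGt_le_iSup_interF (t : ℝ) :
    FalphaGt F α t ≤
      ⨆ (m : Fin r → ℕ) (_ : t < ∑ i, α i * (m i : ℝ)), interF F fun i => (m i : ℤ) :=
  iSup₂_le fun _ ht' => iSup₂_le fun m hm =>
    le_iSup₂_of_le (f := fun (m : Fin r → ℕ) (_ : t < ∑ i, α i * (m i : ℝ)) =>
      interF F fun i => (m i : ℤ)) m (ht'.trans_le hm) le_rfl

theorem Falpha_le_iSup_interF_sup_FalphaGt (t : ℝ) :
    Falpha F α t ≤
      (⨆ m : {m : Fin r → ℕ // ∑ i, α i * (m i : ℝ) = t}, interF F fun i => (m.1 i : ℤ)) ⊔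
        FalphaGt F α t := by
  refine iSup₂_le fun m hm => ?_
  rcases hm.eq_or_lt with heq | hlt
  · exact le_sup_of_le_left (le_iSup_of_le ⟨m, heq.symm⟩ le_rfl)
  · exact le_sup_of_le_right ((interF_le_Falpha le_rfl).trans (Falpha_le_FalphaGt hlt))

theorem iSup_interF_succ_le_FalphaGt (hα : ∀ i, 0 < α i) {t : ℝ} {m : Fin r → ℕ}
    (hm : ∑ i, α i * (m i : ℝ) = t) :
    (⨆ j, interF F fun i => (m i : ℤ) + if i = j then 1 else 0) ≤ FalphaGt F α t := by
  refine iSup_le fun j => ?_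
  have hweight :
      ∑ i, α i * ((m + Pi.single j 1 : Fin r → ℕ) i : ℝ) = ∑ i, α i * (m i : ℝ) + α j := by
    simp [Pi.single_apply, mul_add, Finset.sum_add_distrib]
  have hle := interF_le_Falpha (F := F) hweight.ge
  simp only [Pi.add_apply, Pi.single_apply, Nat.cast_add, Nat.cast_ite, Nat.cast_one,
    Nat.cast_zero] at hle
  exact hle.trans (Falpha_le_FalphaGt (by linarith [hα j]))

end DerivedFiltration

theorem interF_inf_le_iSup_interF_succ {k : Type} [Field k] {r : ℕ} {M : Type} [AddCommGroup M]
    [Module k M] {Rg : Type} [CommRing Rg] [Algebra k Rg] [Module Rg M] [IsScalarTower k Rg M]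
    {F : Fin r → ℤ → Submodule Rg M} (hdec : ∀ i, Antitone (F i))
    [Module.Flat (MvPolynomial (Fin r) k) (ReesSubmodule k r M Rg F)]
    {α : Fin r → ℝ} (hα : ∀ i, 0 < α i) {t : ℝ}
    (m : {m : Fin r → ℕ // ∑ i, α i * (m i : ℝ) = t}) :
    (interF F fun i => (m.1 i : ℤ)) ⊓
        (FalphaGt F α t ⊔ ⨆ (m' : {m : Fin r → ℕ // ∑ i, α i * (m i : ℝ) = t}) (_ : m' ≠ m),
          interF F fun i => (m'.1 i : ℤ)) ≤
      ⨆ j, interF F fun i => (m.1 i : ℤ) + if i = j then 1 else 0 := by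
  set T := {c : Fin r → ℕ | c ≠ m.1 ∧ t ≤ ∑ i, α i * (c i : ℝ)}
  have hT : FalphaGt F α t ⊔ ⨆ (m' : {m : Fin r → ℕ // ∑ i, α i * (m i : ℝ) = t}) (_ : m' ≠ m),
      (interF F fun i => (m'.1 i : ℤ)) ≤ ⨆ c ∈ T, interF F fun i => (c i : ℤ) := by
    refine sup_le ((FalphaGt_le_iSup_interF t).trans (iSup₂_mono' fun c hc => ?_))
      (iSup₂_mono' fun m' hm' => ?_)
    · refine ⟨c, ⟨fun hcm => ?_, hc.le⟩, le_rfl⟩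
      rw [hcm, m.2] at hc
      exact hc.false
    · exact ⟨m'.1, ⟨fun h => hm' (Subtype.ext h), m'.2.ge⟩, le_rfl⟩
  refine (inf_le_inf_left _ hT).trans ((interF_inf_biSup_le_of_flat (k := k) hdec m.1 T).trans ?_)
  refine iSup₂_le fun c ⟨hcm, hc⟩ => ?_
  obtain ⟨j, hj⟩ := exists_lt_of_ne_of_sum_mul_le hα hcm (m.2.symm ▸ hc)
  refine le_iSup_of_le j (interF_antitone hdec fun i => ?_)
  simp only [Nat.cast_max]
  split_ifs with hij
  · subst hij; omega
  · omega

open DirectSum in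
theorem graded_pieces_of_derived_filtration_of_flat_rees
    (k : Type) [Field k] (r : ℕ)
    (M : Type) [AddCommGroup M] [Module k M]
    (Rg : Type) [CommRing Rg] [Algebra k Rg] [Module Rg M] [IsScalarTower k Rg M]
    (F : Fin r → ℤ → Submodule Rg M)
    (hdec : ∀ i, Antitone (F i)) (hF0 : ∀ i, F i 0 = ⊤)
    (hflat : Module.Flat (MvPolynomial (Fin r) k) ↥(ReesSubmodule k r M Rg F))
    (α : Fin r → ℝ) (hα : ∀ i, 0 < α i) :
    Falpha F α 0 = ⊤ ∧
      ∀ t : ℝ, 0 ≤ t →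
        Nonempty
          ((↥(Falpha F α t) ⧸ (FalphaGt F α t).comap (Falpha F α t).subtype) ≃ₗ[Rg]
            ⨁ m : {m : Fin r → ℕ // (∑ i, α i * (m i : ℝ)) = t},
              (↥(interF F fun i => (m.1 i : ℤ)) ⧸
                (⨆ j : Fin r,
                    interF F fun i => (m.1 i : ℤ) + if i = j then 1 else 0).comap
                  (interF F fun i => (m.1 i : ℤ)).subtype)) := by
  refine ⟨Falpha_zero_eq_top hF0, fun t _ => ⟨Submodule.quotientEquivDirectSumQuotient
    (fun m => interF_le_Falpha m.2.ge) (fun m => iSup_interF_succ_le_FalphaGt hα m.2)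
    (Falpha_le_iSup_interF_sup_FalphaGt t) (interF_inf_le_iSup_interF_succ (k := k) hdec hα)⟩⟩
end

section
/- Let A be a Noetherian local ring with maximal ideal 𝔪, and let C_• : 0 → C_r → ... → C_1 → C_0 → 0 be a complex of finitely generated A-modules such that each C_p is Cohen–Macaulay with support equal to Spec A (i.e., maximal Cohen–Macaulay), and such that H_p(C_•) = 0 for p > 0. Let L = H_0(C_•). If dim(Supp L) ≤ dim A − r, then L is Cohen–Macaulay of dimension exactly dim A − r (or L = 0); in particular depth(L) ≥ dim A − r. -/
/-!
By Rees' theorem, `depth M ≥ n` means `Ext^i(k, M) = 0` for `i < n`, so the long exact `Ext`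
sequence gives the depth lemma: in `0 → M₁ → M₂ → M₃ → 0`, `depth M₁ ≥ n + 1` and
`depth M₂ ≥ n` force `depth M₃ ≥ n`. Exactness identifies `im d₀` with `H₀` of the shifted
complex `C_{•+1}`, so induction on `r` along `0 → im d₀ → C₀ → L → 0` gives `depth L ≥ d - r`.
A regular sequence on a nonzero module lowers the dimension of its support by its length, so
`d - r ≤ dim Supp L ≤ d - r`.
-/

universe u v

open RingTheory.Sequence IsLocalRing CategoryTheory Abelian

lemma CategoryTheory.ShortComplex.ShortExact.subsingleton_ext_X₃ {C : Type*} [Category C]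
    [Abelian C] [HasExt C] {S : ShortComplex C} (hS : S.ShortExact) (X : C) {i : ℕ}
    (h₂ : Subsingleton (Ext X S.X₂ i)) (h₁ : Subsingleton (Ext X S.X₁ (i + 1))) :
    Subsingleton (Ext X S.X₃ i) :=
  AddCommGrpCat.subsingleton_of_isZero <| ShortComplex.Exact.isZero_of_both_zeros
    (Ext.covariant_sequence_exact₃' X hS i (i + 1) rfl)
    ((AddCommGrpCat.isZero_of_iff_subsingleton.mpr h₂).eq_zero_of_src _)
    ((AddCommGrpCat.isZero_of_iff_subsingleton.mpr h₁).eq_zero_of_tgt _)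

section Depth

variable {A : Type u} [CommRing A] [IsLocalRing A]

variable (A) in
def HasDepthAtLeast (M : Type v) [AddCommGroup M] [Module A M] (n : ℕ) : Prop :=
  ∃ rs : List A, rs.length = n ∧ (∀ x ∈ rs, x ∈ maximalIdeal A) ∧ IsWeaklyRegular M rs

variable {M : Type v} [AddCommGroup M] [Module A M]

lemma hasDepthAtLeast_zero : HasDepthAtLeast A M 0 :=
  ⟨[], rfl, by simp, .nil A M⟩

lemma hasDepthAtLeast_of_subsingleton [Subsingleton M] (n : ℕ) : HasDepthAtLeast A M n := by
  refine ⟨List.replicate n 0, by simp, by simp, ?_⟩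
  rw [isWeaklyRegular_iff]
  exact fun _ _ a b _ ↦ Subsingleton.elim a b

lemma HasDepthAtLeast.mono {m n : ℕ} (h : HasDepthAtLeast A M n) (hmn : m ≤ n) :
    HasDepthAtLeast A M m := by
  obtain ⟨rs, rfl, hmem, hreg⟩ := h
  refine ⟨rs.take m, by simpa using hmn, fun x hx ↦ hmem x (List.mem_of_mem_take hx), ?_⟩
  rw [← List.take_append_drop m rs, isWeaklyRegular_append_iff] at hreg
  exact hreg.1

lemma HasDepthAtLeast.of_linearEquiv {N : Type*} [AddCommGroup N] [Module A N] {n : ℕ}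
    (h : HasDepthAtLeast A M n) (e : M ≃ₗ[A] N) : HasDepthAtLeast A N n := by
  obtain ⟨rs, hlen, hmem, hreg⟩ := h
  exact ⟨rs, hlen, hmem, (e.isWeaklyRegular_congr rs).mp hreg⟩

variable (A) in
/-- The residue field, shrunk into the universe of the modules, as in
`ModuleCat.exists_isRegular_tfae`. -/
noncomputable abbrev residueModule [Small.{v} A] : ModuleCat.{v} A :=
  ModuleCat.of A (Shrink.{v} (A ⧸ maximalIdeal A))

lemma hasDepthAtLeast_iff_subsingleton_ext [IsNoetherianRing A] [Small.{v} A] [Module.Finite A M]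
    (n : ℕ) : HasDepthAtLeast A M n ↔
      ∀ i < n, Subsingleton (Ext (residueModule A) (ModuleCat.of A M) i) := by
  rcases subsingleton_or_nontrivial M with hM | hM
  · have := (ModuleCat.isZero_of_subsingleton (ModuleCat.of A M)).hasInjectiveDimensionLT_zero
    exact iff_of_true (hasDepthAtLeast_of_subsingleton n)
      fun i _ ↦ HasInjectiveDimensionLT.subsingleton _ 0 i i.zero_le _
  have smul_lt : maximalIdeal A • (⊤ : Submodule A M) < ⊤ := by
    refine lt_top_iff_ne_top.mpr (Submodule.top_ne_ideal_smul_of_le_jacobson_annihilator ?_).symm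
    rw [jacobson_eq_maximalIdeal _ (Module.annihilator_eq_top_iff.not.mpr (not_subsingleton M))]
  refine (((ModuleCat.exists_isRegular_tfae _ n (ModuleCat.of A M) smul_lt).out 1 3).trans
    (exists_congr fun rs ↦ and_congr_right fun _ ↦ and_congr_right fun hmem ↦ ?_)).symm
  exact isRegular_iff_isWeaklyRegular_of_subset_maximalIdeal hmem

lemma HasDepthAtLeast.of_exact [IsNoetherianRing A] [Small.{v} A]
    {M₁ M₂ M₃ : Type v} [AddCommGroup M₁] [Module A M₁] [Module.Finite A M₁]
    [AddCommGroup M₂] [Module A M₂] [Module.Finite A M₂]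
    [AddCommGroup M₃] [Module A M₃] [Module.Finite A M₃]
    {f : M₁ →ₗ[A] M₂} {g : M₂ →ₗ[A] M₃} (hf : Function.Injective f)
    (hg : Function.Surjective g) (hfg : Function.Exact f g) {n : ℕ}
    (h₁ : HasDepthAtLeast A M₁ (n + 1)) (h₂ : HasDepthAtLeast A M₂ n) :
    HasDepthAtLeast A M₃ n := by
  rw [hasDepthAtLeast_iff_subsingleton_ext] at h₁ h₂ ⊢
  have hS := ModuleCat.shortComplex_shortExact
    (ModuleCat.shortComplexOfCompEqZero f g (LinearMap.ext hfg.apply_apply_eq_zero)) hfg hf hg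
  exact fun i hi ↦ hS.subsingleton_ext_X₃ _ (h₂ i hi) (h₁ (i + 1) (by omega))

lemma HasDepthAtLeast.natCast_le_ringKrullDim [IsNoetherianRing A] [Module.Finite A M]
    [Nontrivial M] {n : ℕ} (h : HasDepthAtLeast A M n) :
    (n : WithBot ℕ∞) ≤ ringKrullDim (A ⧸ Module.annihilator A M) := by
  obtain ⟨rs, rfl, hmem, hreg⟩ := h
  have reg : IsRegular M rs := (isRegular_iff_isWeaklyRegular_of_subset_maximalIdeal hmem).mpr hreg
  have := reg.quot_ofList_smul_nontrivial ⊤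
  rw [← Module.supportDim_eq_ringKrullDim_quotient_annihilator,
    ← Module.supportDim_add_length_eq_supportDim_of_isRegular rs reg]
  exact WithBot.le_add_self (Module.supportDim_ne_bot_of_nontrivial A _) _

end Depth

lemma hasDepthAtLeast_quotient_range_of_exact {A : Type u} [CommRing A] [IsLocalRing A]
    [IsNoetherianRing A] [Small.{v} A] (r d : ℕ) (C : ℕ → Type v) [∀ p, AddCommGroup (C p)]
    [∀ p, Module A (C p)] [∀ p, Module.Finite A (C p)]
    (hvanish : ∀ p, r < p → Subsingleton (C p)) (dmap : ∀ p, C (p + 1) →ₗ[A] C p)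
    (hexact : ∀ p, LinearMap.ker (dmap p) = LinearMap.range (dmap (p + 1)))
    (hdepth : ∀ p ≤ r, HasDepthAtLeast A (C p) d) :
    HasDepthAtLeast A (C 0 ⧸ LinearMap.range (dmap 0)) (d - r) := by
  induction r generalizing C with
  | zero =>
    have := hvanish 1 one_pos
    have hrange : LinearMap.range (dmap 0) = ⊥ := by
      rw [LinearMap.range_eq_bot, Subsingleton.elim (dmap 0) 0]
    exact (hdepth 0 le_rfl).of_linearEquiv (Submodule.quotEquivOfEqBot _ hrange).symm
  | succ r ih =>
    rcases le_or_gt d r with hdr | hrd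
    · rw [Nat.sub_eq_zero_of_le (by omega)]
      exact hasDepthAtLeast_zero
    have hrange : HasDepthAtLeast A (LinearMap.range (dmap 0)) (d - r) :=
      (ih (fun p ↦ C (p + 1)) (fun p hp ↦ hvanish (p + 1) (by omega)) (fun p ↦ dmap (p + 1))
        (fun p ↦ hexact (p + 1)) (fun p hp ↦ hdepth (p + 1) (by omega))).of_linearEquiv
        (Submodule.quotEquivOfEq _ _ (hexact 0).symm ≪≫ₗ (dmap 0).quotKerEquivRange)
    exact HasDepthAtLeast.of_exact (Submodule.injective_subtype _) (Submodule.mkQ_surjective _)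
      (LinearMap.exact_subtype_mkQ _) (hrange.mono (by omega))
      ((hdepth 0 (by omega)).mono (by omega))

open RingTheory.Sequence IsLocalRing in
theorem H0_of_acyclic_MCM_complex_is_CM_general
    (A : Type) [CommRing A] [IsNoetherianRing A] [IsLocalRing A]
    (d r : ℕ)
    (C : ℕ → Type) [∀ p, AddCommGroup (C p)] [∀ p, Module A (C p)]
    [∀ p, Module.Finite A (C p)]
    -- the complex is concentrated in degrees `0, …, r`
    (hvanish : ∀ p, r < p → Subsingleton (C p))
    (dmap : ∀ p, C (p + 1) →ₗ[A] C p)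
    -- each `C_p` (for `p ≤ r`) is maximal Cohen–Macaulay with support `Spec A`
    (hMCM : ∀ p, p ≤ r →
      ringKrullDim (A ⧸ Module.annihilator A (C p)) = ringKrullDim A ∧
      ∃ rs : List A, rs.length = d ∧ (∀ x ∈ rs, x ∈ maximalIdeal A) ∧
        IsWeaklyRegular (C p) rs)
    -- `H_p(C_•) = 0` for all `p > 0`
    (hexact : ∀ p, LinearMap.ker (dmap p) = LinearMap.range (dmap (p + 1)))
    -- `dim Supp L ≤ d − r` for `L = H₀ = C₀ / im d₀`
    (hsupp : ringKrullDim (A ⧸ Module.annihilator A (C 0 ⧸ LinearMap.range (dmap 0))) ≤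
      ((d - r : ℕ) : WithBot (WithTop ℕ))) :
    Subsingleton (C 0 ⧸ LinearMap.range (dmap 0)) ∨
      (ringKrullDim (A ⧸ Module.annihilator A (C 0 ⧸ LinearMap.range (dmap 0))) =
          ((d - r : ℕ) : WithBot (WithTop ℕ)) ∧
        ∃ rs : List A, rs.length = d - r ∧ (∀ x ∈ rs, x ∈ maximalIdeal A) ∧
          IsWeaklyRegular (C 0 ⧸ LinearMap.range (dmap 0)) rs) := by
  rcases subsingleton_or_nontrivial (C 0 ⧸ LinearMap.range (dmap 0)) with hL | hL
  · exact Or.inl hL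
  have depth : HasDepthAtLeast A (C 0 ⧸ LinearMap.range (dmap 0)) (d - r) :=
    hasDepthAtLeast_quotient_range_of_exact r d C hvanish dmap hexact fun p hp ↦ (hMCM p hp).2
  exact Or.inr ⟨le_antisymm hsupp depth.natCast_le_ringKrullDim, depth⟩

open RingTheory.Sequence IsLocalRing in
theorem H0_of_acyclic_MCM_complex_is_CM
    (A : Type) [CommRing A] [IsNoetherianRing A] [IsLocalRing A]
    (d r : ℕ) (hd : ringKrullDim A = (d : WithBot (WithTop ℕ))) (hrd : r ≤ d)
    (C : ℕ → Type) [∀ p, AddCommGroup (C p)] [∀ p, Module A (C p)]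
    [∀ p, Module.Finite A (C p)]
    -- the complex is concentrated in degrees `0, …, r`
    (hvanish : ∀ p, r < p → Subsingleton (C p))
    (dmap : ∀ p, C (p + 1) →ₗ[A] C p)
    (hcomplex : ∀ p, (dmap p).comp (dmap (p + 1)) = 0)
    -- each `C_p` (for `p ≤ r`) is maximal Cohen–Macaulay with support `Spec A`
    (hMCM : ∀ p, p ≤ r →
      ringKrullDim (A ⧸ Module.annihilator A (C p)) = ringKrullDim A ∧
      ∃ rs : List A, rs.length = d ∧ (∀ x ∈ rs, x ∈ maximalIdeal A) ∧
        IsWeaklyRegular (C p) rs)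
    -- `H_p(C_•) = 0` for all `p > 0`
    (hexact : ∀ p, LinearMap.ker (dmap p) = LinearMap.range (dmap (p + 1)))
    -- `dim Supp L ≤ d − r` for `L = H₀ = C₀ / im d₀`
    (hsupp : ringKrullDim (A ⧸ Module.annihilator A (C 0 ⧸ LinearMap.range (dmap 0))) ≤
      ((d - r : ℕ) : WithBot (WithTop ℕ))) :
    Subsingleton (C 0 ⧸ LinearMap.range (dmap 0)) ∨
      (ringKrullDim (A ⧸ Module.annihilator A (C 0 ⧸ LinearMap.range (dmap 0))) =
          ((d - r : ℕ) : WithBot (WithTop ℕ)) ∧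
        ∃ rs : List A, rs.length = d - r ∧ (∀ x ∈ rs, x ∈ maximalIdeal A) ∧
          IsWeaklyRegular (C 0 ⧸ LinearMap.range (dmap 0)) rs) :=
  H0_of_acyclic_MCM_complex_is_CM_general A d r C hvanish dmap hMCM hexact hsupp
end
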